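/- arXiv:2203.10414 — 2 statements merged into one kernel-verified Lean document; each statement's English description precedes it below -/
import Mathlib

section
/- Let b ∈ (0,3], T > 0, and let u be a classical solution of the b-equation on [0,T)×ℝ. Assume that either u(t,x) ≥ 0 for all (t,x) ∈ [0,T)×ℝ or u(t,x) ≤ 0 for all (t,x) ∈ [0,T)×ℝ, and that the quantity H(t) = ∫_ℝ u(t,x) dx is finite and independent of t ∈ [0,T). If u vanishes identically on a nonempty open subset of (0,T)×ℝ, then u(t,x) = 0 for all (t,x) ∈ [0,T)×ℝ. -/
/-!
Pick a point `(t₀, x₀)` of the open set where `u` vanishes. Near `x₀` both `u(t₀,·)` and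
`uₜ(t₀,·)` vanish, so the equation gives `∂ₓΛ⁻²F = 0` near `x₀`, where
`F = (b/2)u² + ((3-b)/2)uₓ²` at time `t₀`. Differentiating once more,
`0 = ∂ₓ²Λ⁻²F = Λ⁻²F - F`, and `F(x₀) = 0`, so `Λ⁻²F(x₀) = 0`. Since `b ∈ (0,3]`,
`F ≥ 0`, and the kernel `e^{-|x|}/2` is positive, this forces `F ≡ 0`, hence
`u(t₀,·) ≡ 0`. The conserved quantity is therefore `0`, and a continuous function of one
sign with zero integral vanishes.
-/

open MeasureTheory Set

/-- The inverse Helmholtz operator `Λ⁻² = (1 - ∂ₓ²)⁻¹` on the line, given by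
convolution with the kernel `e^{-|x|}/2`. -/
noncomputable def lam2 (w : ℝ → ℝ) (x : ℝ) : ℝ :=
  (1/2) * ∫ y : ℝ, Real.exp (-|x - y|) * w y

/-- A classical solution of the `b`-equation
`uₜ + u uₓ = -∂ₓΛ⁻²((b/2)u² + ((3-b)/2)uₓ²)` on `[0,T) × ℝ`: for each `t ∈ [0,T)`,
`u(t,·)` is continuously differentiable with `u(t,·)` and `∂ₓu(t,·)` continuous,
bounded and integrable; `∂ₜu` exists on `(0,T) × ℝ`; and the equation holds
pointwise on `(0,T) × ℝ`. -/
def IsBEquationSolution (b T : ℝ) (u : ℝ → ℝ → ℝ) : Prop :=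
  (∀ t ∈ Set.Ico (0:ℝ) T,
    ContDiff ℝ 1 (u t) ∧
    (∃ C : ℝ, ∀ x, |u t x| ≤ C) ∧ Integrable (u t) ∧
    (∃ C : ℝ, ∀ x, |deriv (u t) x| ≤ C) ∧ Integrable (deriv (u t))) ∧
  (∀ t ∈ Set.Ioo (0:ℝ) T, ∀ x : ℝ, DifferentiableAt ℝ (fun s => u s x) t) ∧
  (∀ t ∈ Set.Ioo (0:ℝ) T, ∀ x : ℝ,
    deriv (fun s => u s x) t + u t x * deriv (u t) x =
      -(deriv (lam2 (fun y => (b/2) * (u t y)^2 + ((3-b)/2) * (deriv (u t) y)^2)) x))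

open Filter Topology Real

theorem Continuous.eq_zero_of_integral_eq_zero_of_nonneg {X : Type*} [TopologicalSpace X]
    [MeasurableSpace X] {μ : Measure X} [μ.IsOpenPosMeasure] {f : X → ℝ} (hf : Continuous f)
    (hfi : Integrable f μ) (hf0 : 0 ≤ f) (h : ∫ x, f x ∂μ = 0) : f = 0 :=
  Measure.eq_of_ae_eq ((integral_eq_zero_iff_of_nonneg hf0 hfi).mp h) hf continuous_const

theorem Continuous.eq_zero_of_integral_eq_zero_of_nonpos {X : Type*} [TopologicalSpace X]
    [MeasurableSpace X] {μ : Measure X} [μ.IsOpenPosMeasure] {f : X → ℝ} (hf : Continuous f)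
    (hfi : Integrable f μ) (hf0 : f ≤ 0) (h : ∫ x, f x ∂μ = 0) : f = 0 :=
  neg_eq_zero.mp <| hf.neg.eq_zero_of_integral_eq_zero_of_nonneg hfi.neg (neg_nonneg.mpr hf0)
    (by simp [integral_neg, h])

theorem MeasureTheory.Integrable.sq_of_bounded {α : Type*} [MeasurableSpace α]
    {μ : Measure α} {f : α → ℝ} (hf : Integrable f μ) {C : ℝ} (hC : ∀ x, |f x| ≤ C) :
    Integrable (fun x => f x ^ 2) μ := by
  simpa [pow_two] using hf.bdd_mul hf.aestronglyMeasurable (Eventually.of_forall hC)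

section Lam2

variable {F : ℝ → ℝ}

noncomputable def lam2LeftTail (F : ℝ → ℝ) (x : ℝ) : ℝ := ∫ y in Iic x, exp y * F y

noncomputable def lam2RightTail (F : ℝ → ℝ) (x : ℝ) : ℝ := ∫ y in Ioi x, exp (-y) * F y

theorem MeasureTheory.Integrable.integrableOn_exp_mul_Iic (hF : Integrable F) (a : ℝ) :
    IntegrableOn (fun y => exp y * F y) (Iic a) :=
  hF.integrableOn.bdd_mul continuous_exp.aestronglyMeasurable (c := exp a) <|
    (ae_restrict_iff' measurableSet_Iic).mpr <| Eventually.of_forall fun y hy => by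
      simpa [abs_of_pos (exp_pos y)] using exp_le_exp.mpr hy

theorem MeasureTheory.Integrable.integrableOn_exp_neg_mul_Ioi (hF : Integrable F) (a : ℝ) :
    IntegrableOn (fun y => exp (-y) * F y) (Ioi a) :=
  hF.integrableOn.bdd_mul (continuous_exp.comp continuous_neg).aestronglyMeasurable
    (c := exp (-a)) <| (ae_restrict_iff' measurableSet_Ioi).mpr <|
      Eventually.of_forall fun y hy => by
        simpa [abs_of_pos (exp_pos _)] using exp_le_exp.mpr (neg_le_neg (le_of_lt hy))

theorem MeasureTheory.Integrable.exp_neg_abs_sub_mul (hF : Integrable F) (x : ℝ) :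
    Integrable (fun y => exp (-|x - y|) * F y) :=
  hF.bdd_mul (by fun_prop) (c := 1) <| Eventually.of_forall fun y => by
    simp [abs_of_pos (exp_pos _)]

theorem hasDerivAt_lam2LeftTail (hFc : Continuous F) (hF : Integrable F) (x : ℝ) :
    HasDerivAt (lam2LeftTail F) (exp x * F x) x := by
  have : lam2LeftTail F = fun z => lam2LeftTail F 0 + ∫ y in (0)..z, exp y * F y := by
    funext z
    rw [← intervalIntegral.integral_Iic_sub_Iic (hF.integrableOn_exp_mul_Iic 0)
      (hF.integrableOn_exp_mul_Iic z), lam2LeftTail, lam2LeftTail, add_sub_cancel]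
  rw [this]
  exact ((continuous_exp.mul hFc).integral_hasStrictDerivAt 0 x).hasDerivAt.const_add _

theorem hasDerivAt_lam2RightTail (hFc : Continuous F) (hF : Integrable F) (x : ℝ) :
    HasDerivAt (lam2RightTail F) (-(exp (-x) * F x)) x := by
  have : lam2RightTail F = fun z => lam2RightTail F 0 - ∫ y in (0)..z, exp (-y) * F y := by
    funext z
    rw [← intervalIntegral.integral_Ioi_sub_Ioi' (hF.integrableOn_exp_neg_mul_Ioi 0)
      (hF.integrableOn_exp_neg_mul_Ioi z), lam2RightTail, lam2RightTail, sub_sub_cancel]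
  rw [this]
  exact (((continuous_exp.comp continuous_neg).mul hFc).integral_hasStrictDerivAt 0
    x).hasDerivAt.const_sub _

theorem lam2_eq_tails (hF : Integrable F) (x : ℝ) :
    lam2 F x = (1/2) * (exp (-x) * lam2LeftTail F x + exp x * lam2RightTail F x) := by
  have hker := hF.exp_neg_abs_sub_mul x
  rw [lam2, ← intervalIntegral.integral_Iic_add_Ioi hker.integrableOn hker.integrableOn,
    lam2LeftTail, lam2RightTail, ← integral_const_mul, ← integral_const_mul]
  congr 2
  · refine setIntegral_congr_fun measurableSet_Iic fun y hy => ?_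
    rw [abs_of_nonneg (sub_nonneg.mpr hy), ← mul_assoc, ← exp_add]
    ring_nf
  · refine setIntegral_congr_fun measurableSet_Ioi fun y hy => ?_
    rw [abs_of_nonpos (sub_nonpos.mpr (le_of_lt hy)), ← mul_assoc, ← exp_add]
    ring_nf

theorem hasDerivAt_lam2 (hFc : Continuous F) (hF : Integrable F) (x : ℝ) :
    HasDerivAt (lam2 F)
      ((1/2) * (exp x * lam2RightTail F x - exp (-x) * lam2LeftTail F x)) x := by
  have hL := (hasDerivAt_neg x).exp.mul (hasDerivAt_lam2LeftTail hFc hF x)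
  have hR := (hasDerivAt_exp x).mul (hasDerivAt_lam2RightTail hFc hF x)
  rw [funext (lam2_eq_tails hF)]
  refine ((hL.add hR).const_mul (1/2)).congr_deriv ?_
  rw [exp_neg]
  field_simp
  ring

theorem hasDerivAt_deriv_lam2 (hFc : Continuous F) (hF : Integrable F) (x : ℝ) :
    HasDerivAt (deriv (lam2 F)) (lam2 F x - F x) x := by
  have hL := (hasDerivAt_neg x).exp.mul (hasDerivAt_lam2LeftTail hFc hF x)
  have hR := (hasDerivAt_exp x).mul (hasDerivAt_lam2RightTail hFc hF x)
  rw [funext fun z => (hasDerivAt_lam2 hFc hF z).deriv, lam2_eq_tails hF]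
  refine ((hR.sub hL).const_mul (1/2)).congr_deriv ?_
  rw [exp_neg]
  field_simp
  ring

theorem eq_zero_of_lam2_eq_zero (hFc : Continuous F) (hF : Integrable F) (hF0 : 0 ≤ F)
    {x : ℝ} (hx : lam2 F x = 0) : F = 0 := by
  have hker := hF.exp_neg_abs_sub_mul x
  have hkerc : Continuous fun y => exp (-|x - y|) * F y := by fun_prop
  have h := hkerc.eq_zero_of_integral_eq_zero_of_nonneg hker
    (fun y => mul_nonneg (exp_pos _).le (hF0 y)) (by simpa [lam2] using hx)
  funext y
  exact (mul_eq_zero.mp (congrFun h y)).resolve_left (exp_ne_zero _)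

end Lam2

theorem eq_zero_and_partials_eq_zero_of_eventually {f : ℝ → ℝ → ℝ} {t x : ℝ}
    (h : ∀ᶠ p : ℝ × ℝ in 𝓝 (t, x), f p.1 p.2 = 0) :
    f t x = 0 ∧ deriv (f t) x = 0 ∧ deriv (fun s => f s x) t = 0 := by
  have hx : f t =ᶠ[𝓝 x] fun _ => 0 :=
    (continuous_const.prodMk continuous_id).continuousAt.tendsto.eventually h
  have ht : (fun s => f s x) =ᶠ[𝓝 t] fun _ => 0 :=
    (continuous_id.prodMk continuous_const).continuousAt.tendsto.eventually h
  exact ⟨h.self_of_nhds, by simp [hx.deriv_eq], by simp [ht.deriv_eq]⟩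

section BEquation

variable {b : ℝ} {v : ℝ → ℝ}

noncomputable def bNonlocalTerm (b : ℝ) (v : ℝ → ℝ) (y : ℝ) : ℝ :=
  (b/2) * (v y)^2 + ((3-b)/2) * (deriv v y)^2

theorem bNonlocalTerm_nonneg (hb : b ∈ Icc (0:ℝ) 3) : 0 ≤ bNonlocalTerm b v := fun y =>
  add_nonneg (mul_nonneg (by linarith [hb.1]) (sq_nonneg _))
    (mul_nonneg (by linarith [hb.2]) (sq_nonneg _))

theorem eq_zero_of_bNonlocalTerm_eq_zero (hb : b ∈ Ioc (0:ℝ) 3) {y : ℝ}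
    (h : bNonlocalTerm b v y = 0) : v y = 0 := by
  unfold bNonlocalTerm at h
  have hsq : v y ^ 2 = 0 := by
    nlinarith [sq_nonneg (v y), mul_nonneg (sub_nonneg.mpr hb.2) (sq_nonneg (deriv v y)), hb.1]
  exact pow_eq_zero_iff two_ne_zero |>.mp hsq

theorem continuous_bNonlocalTerm (hv : ContDiff ℝ 1 v) : Continuous (bNonlocalTerm b v) :=
  (continuous_const.mul (hv.continuous.pow 2)).add
    (continuous_const.mul ((hv.continuous_deriv le_rfl).pow 2))

theorem integrable_bNonlocalTerm (hvC : ∃ C, ∀ x, |v x| ≤ C) (hv : Integrable v)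
    (hv'C : ∃ C, ∀ x, |deriv v x| ≤ C) (hv' : Integrable (deriv v)) :
    Integrable (bNonlocalTerm b v) := by
  obtain ⟨C, hC⟩ := hvC
  obtain ⟨C', hC'⟩ := hv'C
  exact ((hv.sq_of_bounded hC).const_mul _).add ((hv'.sq_of_bounded hC').const_mul _)

end BEquation

theorem IsBEquationSolution.slice_eq_zero_of_eventually_eq_zero {b T : ℝ} {u : ℝ → ℝ → ℝ}
    (hu : IsBEquationSolution b T u) (hb : b ∈ Ioc (0:ℝ) 3) {t₀ x₀ : ℝ} (ht₀ : t₀ ∈ Ioo 0 T)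
    (hvan : ∀ᶠ p : ℝ × ℝ in 𝓝 (t₀, x₀), u p.1 p.2 = 0) (x : ℝ) : u t₀ x = 0 := by
  obtain ⟨hC1, hbdd, hint, hbdd', hint'⟩ := hu.1 t₀ (Ioo_subset_Ico_self ht₀)
  set F := bNonlocalTerm b (u t₀)
  have hFc : Continuous F := continuous_bNonlocalTerm hC1
  have hFi : Integrable F := integrable_bNonlocalTerm hbdd hint hbdd' hint'
  have hlocal : ∀ᶠ x in 𝓝 x₀, ∀ᶠ q : ℝ × ℝ in 𝓝 (t₀, x), u q.1 q.2 = 0 :=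
    (continuous_const.prodMk continuous_id).continuousAt.tendsto.eventually
      (eventually_eventually_nhds.mpr hvan)
  -- On the patch, `uₜ = u = 0`, so the equation leaves `∂ₓΛ⁻²F = 0` there.
  have hderiv : deriv (lam2 F) =ᶠ[𝓝 x₀] 0 := hlocal.mono fun x hx => by
    obtain ⟨h0, -, ht0⟩ := eq_zero_and_partials_eq_zero_of_eventually hx
    have h : deriv (fun s => u s x) t₀ + u t₀ x * deriv (u t₀) x = -deriv (lam2 F) x :=
      hu.2.2 t₀ ht₀ x
    simpa [h0, ht0] using h.symm
  have hFx₀ : F x₀ = 0 := by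
    obtain ⟨h0, hx0, -⟩ := eq_zero_and_partials_eq_zero_of_eventually hlocal.self_of_nhds
    simp [F, bNonlocalTerm, h0, hx0]
  have hlam : lam2 F x₀ = 0 := by
    have := (hasDerivAt_deriv_lam2 hFc hFi x₀).deriv
    rw [hderiv.deriv_eq, hFx₀] at this
    simpa using this.symm
  have hF : F = 0 :=
    eq_zero_of_lam2_eq_zero hFc hFi (bNonlocalTerm_nonneg (Ioc_subset_Icc_self hb)) hlam
  exact eq_zero_of_bNonlocalTerm_eq_zero hb (congrFun hF x)

theorem bEquation_unique_continuation_conserved_general (b T : ℝ)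
    (hb : b ∈ Set.Ioc (0:ℝ) 3)
    (u : ℝ → ℝ → ℝ) (hu : IsBEquationSolution b T u)
    (hsign : (∀ t ∈ Set.Ico (0:ℝ) T, ∀ x : ℝ, 0 ≤ u t x) ∨
             (∀ t ∈ Set.Ico (0:ℝ) T, ∀ x : ℝ, u t x ≤ 0))
    (hcons : ∃ c : ℝ, ∀ t ∈ Set.Ico (0:ℝ) T, (∫ x : ℝ, u t x) = c)
    (Ω : Set (ℝ × ℝ)) (hΩopen : IsOpen Ω) (hΩne : Ω.Nonempty)
    (hΩsub : Ω ⊆ Set.Ioo (0:ℝ) T ×ˢ Set.univ)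
    (hvan : ∀ p ∈ Ω, u p.1 p.2 = 0) :
    ∀ t ∈ Set.Ico (0:ℝ) T, ∀ x : ℝ, u t x = 0 := by
  obtain ⟨⟨t₀, x₀⟩, hp⟩ := hΩne
  have ht₀ : t₀ ∈ Ioo 0 T := (hΩsub hp).1
  have hu₀ := hu.slice_eq_zero_of_eventually_eq_zero hb ht₀
    (eventually_of_mem (hΩopen.mem_nhds hp) hvan)
  obtain ⟨c, hc⟩ := hcons
  intro t ht
  have hH : ∫ x, u t x = 0 := by
    rw [hc t ht, ← hc t₀ (Ioo_subset_Ico_self ht₀)]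
    simp [hu₀]
  obtain ⟨hC1t, -, hit, -⟩ := hu.1 t ht
  rcases hsign with hpos | hneg
  · exact congrFun (hC1t.continuous.eq_zero_of_integral_eq_zero_of_nonneg hit (hpos t ht) hH)
  · exact congrFun (hC1t.continuous.eq_zero_of_integral_eq_zero_of_nonpos hit (hneg t ht) hH)

/-- **Unique continuation for the `b`-equation via the conserved quantity
`H(t) = ∫ u dx` (section 3.1).** A signed classical solution of the `b`-equation,
`b ∈ (0,3]`, with conserved `∫_ℝ u(t,x) dx`, vanishing on a nonempty open subset of
`(0,T) × ℝ`, vanishes identically. -/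
theorem bEquation_unique_continuation_conserved (b T : ℝ)
    (hb : b ∈ Set.Ioc (0:ℝ) 3) (hT : 0 < T)
    (u : ℝ → ℝ → ℝ) (hu : IsBEquationSolution b T u)
    (hsign : (∀ t ∈ Set.Ico (0:ℝ) T, ∀ x : ℝ, 0 ≤ u t x) ∨
             (∀ t ∈ Set.Ico (0:ℝ) T, ∀ x : ℝ, u t x ≤ 0))
    (hcons : ∃ c : ℝ, ∀ t ∈ Set.Ico (0:ℝ) T, (∫ x : ℝ, u t x) = c)
    (Ω : Set (ℝ × ℝ)) (hΩopen : IsOpen Ω) (hΩne : Ω.Nonempty)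
    (hΩsub : Ω ⊆ Set.Ioo (0:ℝ) T ×ˢ Set.univ)
    (hvan : ∀ p ∈ Ω, u p.1 p.2 = 0) :
    ∀ t ∈ Set.Ico (0:ℝ) T, ∀ x : ℝ, u t x = 0 :=
  bEquation_unique_continuation_conserved_general b T hb u hu hsign hcons Ω hΩopen hΩne hΩsub hvan
end

section
/- Let T > 0 and let u be a classical solution of the potential Camassa–Holm equation on [0,T)×ℝ. If there exist t₀ ∈ (0,T) and real numbers a < b such that u(t₀,x) = 0 and ∂ₜu(t₀,x) = 0 for all x ∈ [a,b], then u(t₀,x) = 0 for all x ∈ ℝ. -/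
open MeasureTheory Set Filter

/-- A classical solution of the potential Camassa-Holm equation in nonlocal form
`uₜ - (1/2)uₓ² = Λ⁻²(uₓ² + (1/2)uₓₓ²)` on `[0,T) × ℝ`: for each `t ∈ [0,T)`,
`u(t,·)` is twice continuously differentiable with `∂ₓu(t,·)` and `∂ₓ²u(t,·)`
continuous, bounded and integrable; `u(t,x) → 0` as `|x| → ∞`; `∂ₜu` exists on
`(0,T) × ℝ`; and the equation holds pointwise on `(0,T) × ℝ`. -/
def IsPotentialCHSolution (T : ℝ) (u : ℝ → ℝ → ℝ) : Prop :=
  (∀ t ∈ Set.Ico (0:ℝ) T,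
    ContDiff ℝ 2 (u t) ∧
    (∃ C : ℝ, ∀ x, |deriv (u t) x| ≤ C) ∧ Integrable (deriv (u t)) ∧
    (∃ C : ℝ, ∀ x, |deriv (deriv (u t)) x| ≤ C) ∧ Integrable (deriv (deriv (u t))) ∧
    Tendsto (u t) (cocompact ℝ) (nhds 0)) ∧
  (∀ t ∈ Set.Ioo (0:ℝ) T, ∀ x : ℝ, DifferentiableAt ℝ (fun s => u s x) t) ∧
  (∀ t ∈ Set.Ioo (0:ℝ) T, ∀ x : ℝ,
    deriv (fun s => u s x) t - (1/2) * (deriv (u t) x)^2 =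
      lam2 (fun y => (deriv (u t) y)^2 + (1/2) * (deriv (deriv (u t)) y)^2) x)

open Topology

/-!
At an interior point `x₀` of `[a, b]` both `uₜ(t₀, x₀)` and `uₓ(t₀, x₀)` vanish, so the equation
forces `Λ⁻²(uₓ² + ½uₓₓ²)(t₀, x₀) = 0`. The kernel `e^{-|x₀ - y|}` is strictly positive and the
density `uₓ² + ½uₓₓ²` is continuous and nonnegative, hence it vanishes identically. Thus
`u(t₀, ·)` is constant, and its decay at infinity makes the constant zero.
-/

theorem eq_zero_of_lam2_eq_zero_s11 {w : ℝ → ℝ} (hwc : Continuous w) (hw0 : 0 ≤ w)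
    (hwi : Integrable w) {x : ℝ} (h : lam2 w x = 0) : w = 0 := by
  set k : ℝ → ℝ := fun y => Real.exp (-|x - y|) * w y
  have hkernel : Continuous fun y => Real.exp (-|x - y|) := by fun_prop
  have hk0 : 0 ≤ k := fun y => mul_nonneg (Real.exp_pos _).le (hw0 y)
  have hki : Integrable k := by
    refine hwi.bdd_mul (c := 1) hkernel.aestronglyMeasurable (ae_of_all _ fun y => ?_)
    rw [Real.norm_of_nonneg (Real.exp_pos _).le, Real.exp_le_one_iff, neg_nonpos]
    exact abs_nonneg _
  have hk_int : ∫ y, k y = 0 := by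
    unfold lam2 at h
    linarith
  have hk : k = 0 := (((hkernel.mul hwc).ae_eq_iff_eq volume continuous_const).1
    ((integral_eq_zero_iff_of_nonneg hk0 hki).1 hk_int))
  funext y
  exact (mul_eq_zero.1 (congrFun hk y)).resolve_left (Real.exp_pos _).ne'

theorem MeasureTheory.Integrable.sq_of_abs_le {α : Type*} [MeasurableSpace α] {μ : Measure α}
    {f : α → ℝ} {C : ℝ} (hf : Integrable f μ) (hC : ∀ x, |f x| ≤ C) : Integrable (fun x => f x ^ 2) μ := by
  simpa only [sq] using hf.bdd_mul hf.aestronglyMeasurable (ae_of_all _ hC)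

theorem eq_zero_of_deriv_eq_zero_of_tendsto_cocompact {E : Type*} [NormedAddCommGroup E]
    [NormedSpace ℝ E] {v : ℝ → E} (hv : Differentiable ℝ v) (hv' : ∀ x, deriv v x = 0)
    (hlim : Tendsto v (cocompact ℝ) (𝓝 0)) : v = 0 := by
  have hconst : v = fun _ => v 0 := funext fun x => is_const_of_deriv_eq_zero hv hv' x 0
  rw [hconst] at hlim ⊢
  rw [tendsto_nhds_unique tendsto_const_nhds hlim]
  rfl

noncomputable def pchDensity (v : ℝ → ℝ) (y : ℝ) : ℝ :=
  (deriv v y)^2 + (1/2) * (deriv (deriv v) y)^2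

section pchDensity

variable {v : ℝ → ℝ}

theorem pchDensity_nonneg : 0 ≤ pchDensity v := fun y => by
  unfold pchDensity
  positivity

theorem deriv_eq_zero_of_pchDensity_eq_zero {y : ℝ} (h : pchDensity v y = 0) :
    deriv v y = 0 := by
  unfold pchDensity at h
  nlinarith [sq_nonneg (deriv v y), sq_nonneg (deriv (deriv v) y)]

theorem continuous_pchDensity (hv : ContDiff ℝ 2 v) : Continuous (pchDensity v) := by
  have hv' : ContDiff ℝ 1 (deriv v) := (contDiff_succ_iff_deriv.1 hv).2.2
  have := hv'.continuous
  have := hv'.continuous_deriv le_rfl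
  unfold pchDensity
  fun_prop

theorem integrable_pchDensity {C₁ C₂ : ℝ} (hC₁ : ∀ x, |deriv v x| ≤ C₁)
    (hi₁ : Integrable (deriv v)) (hC₂ : ∀ x, |deriv (deriv v) x| ≤ C₂)
    (hi₂ : Integrable (deriv (deriv v))) : Integrable (pchDensity v) :=
  (hi₁.sq_of_abs_le hC₁).add ((hi₂.sq_of_abs_le hC₂).const_mul _)

end pchDensity

theorem potentialCH_vanishing_on_slice_general (T : ℝ)
    (u : ℝ → ℝ → ℝ) (hu : IsPotentialCHSolution T u)
    (t₀ : ℝ) (ht₀ : t₀ ∈ Set.Ioo (0:ℝ) T) (a b : ℝ) (hab : a < b)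
    (hvu : ∀ x ∈ Set.Icc a b, u t₀ x = 0)
    (hvut : ∀ x ∈ Set.Icc a b, deriv (fun s => u s x) t₀ = 0) :
    ∀ x : ℝ, u t₀ x = 0 := by
  obtain ⟨hreg, -, hpde⟩ := hu
  obtain ⟨hc2, ⟨C₁, hC₁⟩, hi₁, ⟨C₂, hC₂⟩, hi₂, hlim⟩ := hreg t₀ (Ioo_subset_Ico_self ht₀)
  have hx₀ : Icc a b ∈ 𝓝 ((a + b) / 2) := Icc_mem_nhds (by linarith) (by linarith)
  have hux₀ : deriv (u t₀) ((a + b) / 2) = 0 := by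
    have hloc : u t₀ =ᶠ[𝓝 ((a + b) / 2)] fun _ => 0 := eventually_of_mem hx₀ hvu
    simpa using hloc.deriv_eq
  have hlam : lam2 (pchDensity (u t₀)) ((a + b) / 2) = 0 := by
    have hpde₀ := hpde t₀ ht₀ ((a + b) / 2)
    rw [hvut _ (mem_of_mem_nhds hx₀), hux₀] at hpde₀
    unfold pchDensity
    rw [← hpde₀]
    ring
  have hρ : pchDensity (u t₀) = 0 := eq_zero_of_lam2_eq_zero_s11 (continuous_pchDensity hc2)
    pchDensity_nonneg (integrable_pchDensity hC₁ hi₁ hC₂ hi₂) hlam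
  have hu₀ : u t₀ = 0 := eq_zero_of_deriv_eq_zero_of_tendsto_cocompact
    (hc2.differentiable two_ne_zero)
    (fun y => deriv_eq_zero_of_pchDensity_eq_zero (congrFun hρ y)) hlim
  exact fun x => congrFun hu₀ x

/-- **Potential Camassa-Holm equation, slice version (section 3.3).**
If a classical solution of the potential Camassa-Holm equation satisfies
`u(t₀,·) = 0` and `∂ₜu(t₀,·) = 0` on an interval `[a,b]`, then `u(t₀,·) ≡ 0`. -/
theorem potentialCH_vanishing_on_slice (T : ℝ) (hT : 0 < T)
    (u : ℝ → ℝ → ℝ) (hu : IsPotentialCHSolution T u)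
    (t₀ : ℝ) (ht₀ : t₀ ∈ Set.Ioo (0:ℝ) T) (a b : ℝ) (hab : a < b)
    (hvu : ∀ x ∈ Set.Icc a b, u t₀ x = 0)
    (hvut : ∀ x ∈ Set.Icc a b, deriv (fun s => u s x) t₀ = 0) :
    ∀ x : ℝ, u t₀ x = 0 :=
  potentialCH_vanishing_on_slice_general T u hu t₀ ht₀ a b hab hvu hvut
end
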